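/- arXiv:2103.12671 — 4 statements merged into one kernel-verified Lean document; each statement's English description precedes it below -/
import Mathlib

section
/- Let f, g : F_2^N → {0,1} and ν : F_2^N → ℝ satisfy E[ν] = 1 and ⟨f * g, ν⟩ = 0, where (f*g)(x) = E_y f(y)g(x−y) and the inner product is the expectation inner product. Let m = max over nonzero λ of |ν̂(λ)| where ν̂(λ) = E_x ν(x)(−1)^{λ·x}. Then E[f]·E[g] ≤ (m/(1+m))². -/
open Finset

/-- Expectation over the uniform measure on `F_2^N`. -/
noncomputable def fexp {N : ℕ} (f : (Fin N → ZMod 2) → ℝ) : ℝ :=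
  (∑ x : Fin N → ZMod 2, f x) / 2 ^ N

/-- The character `(-1)^{λ·x}` on `F_2^N`. -/
noncomputable def chr {N : ℕ} (l x : Fin N → ZMod 2) : ℝ :=
  if (∑ i, l i * x i : ZMod 2) = 0 then 1 else -1

/-- Fourier transform `f̂(λ) = E_x f(x)(-1)^{λ·x}`. -/
noncomputable def fhat {N : ℕ} (f : (Fin N → ZMod 2) → ℝ) (l : Fin N → ZMod 2) : ℝ :=
  (∑ x : Fin N → ZMod 2, f x * chr l x) / 2 ^ N

/-- Convolution `(f*g)(x) = E_y f(y) g(x-y)`. -/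
noncomputable def conv {N : ℕ} (f g : (Fin N → ZMod 2) → ℝ) (x : Fin N → ZMod 2) : ℝ :=
  (∑ y : Fin N → ZMod 2, f y * g (x - y)) / 2 ^ N

/-- Expectation inner product `⟨f, ν⟩ = E_x f(x) ν(x)`. -/
noncomputable def einner {N : ℕ} (f ν : (Fin N → ZMod 2) → ℝ) : ℝ :=
  (∑ x : Fin N → ZMod 2, f x * ν x) / 2 ^ N

section Aux
variable {N : ℕ}

lemma chr_add (l x y : Fin N → ZMod 2) : chr l (x + y) = chr l x * chr l y := by
  unfold chr
  have h : (∑ i, l i * (x + y) i) = (∑ i, l i * x i) + (∑ i, l i * y i) := by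
    rw [← Finset.sum_add_distrib]
    exact Finset.sum_congr rfl fun i _ => by simp [mul_add]
  rw [h]
  rcases (by decide : ∀ a : ZMod 2, a = 0 ∨ a = 1) (∑ i, l i * x i) with h1 | h1 <;>
  rcases (by decide : ∀ a : ZMod 2, a = 0 ∨ a = 1) (∑ i, l i * y i) with h2 | h2 <;>
    simp [h1, h2, (by decide : (1 : ZMod 2) + 1 = 0), (by decide : (1 : ZMod 2) ≠ 0)]

lemma chr_comm (l x : Fin N → ZMod 2) : chr l x = chr x l := by
  unfold chr; rw [show (∑ i, l i * x i) = ∑ i, x i * l i from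
    Finset.sum_congr rfl fun i _ => mul_comm _ _]

lemma chr_zero_left (x : Fin N → ZMod 2) : chr 0 x = 1 := by simp [chr]

lemma sum_chr {l : Fin N → ZMod 2} (hl : l ≠ 0) : ∑ x, chr l x = 0 := by
  obtain ⟨i, hi⟩ : ∃ i, l i ≠ 0 := by
    by_contra h; push_neg at h; exact hl (funext h)
  set e : Fin N → ZMod 2 := Pi.single i 1 with he
  have hce : chr l e = -1 := by
    unfold chr
    have hs : (∑ j, l j * e j) = l i := by
      simp [he, Pi.single_apply, mul_ite, Finset.sum_ite_eq']
    rw [hs]; simp [hi]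
  have key : ∑ x, chr l x = ∑ x, chr l (x + e) :=
    (Fintype.sum_equiv (Equiv.addRight e) _ _ fun x => rfl).symm
  have key2 : ∑ x, chr l (x + e) = - ∑ x, chr l x := by
    simp [chr_add, hce]
  linarith

lemma card_G : (Fintype.card (Fin N → ZMod 2) : ℝ) = 2 ^ N := by
  simp [Fintype.card_fun]

lemma sum_chr_eq (l : Fin N → ZMod 2) :
    ∑ x, chr l x = if l = 0 then (2 : ℝ) ^ N else 0 := by
  by_cases hl : l = 0
  · subst hl
    simp only [chr_zero_left, Finset.sum_const, Finset.card_univ, nsmul_eq_mul, mul_one,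
      if_pos rfl]
    exact card_G
  · simp [hl, sum_chr hl]

lemma neg_self (x : Fin N → ZMod 2) : -x = x := by
  funext i
  have : ∀ a : ZMod 2, -a = a := by decide
  simp [this]

lemma pi_add_eq_zero_iff (x y : Fin N → ZMod 2) : x + y = 0 ↔ y = x := by
  constructor
  · intro h
    have := neg_eq_of_add_eq_zero_left h
    rwa [neg_self] at this
  · rintro rfl
    funext i
    have : ∀ a : ZMod 2, a + a = 0 := by decide
    simp [this]

lemma parseval_raw (h k : (Fin N → ZMod 2) → ℝ) :
    ∑ l, (∑ x, h x * chr l x) * (∑ y, k y * chr l y)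
      = 2 ^ N * ∑ x, h x * k x := by
  have step1 : ∀ l : Fin N → ZMod 2,
      (∑ x, h x * chr l x) * (∑ y, k y * chr l y)
        = ∑ x, ∑ y, (h x * k y) * chr l (x + y) := by
    intro l
    rw [Finset.sum_mul_sum]
    refine Finset.sum_congr rfl fun x _ => Finset.sum_congr rfl fun y _ => ?_
    rw [chr_add]; ring
  simp_rw [step1]
  rw [Finset.sum_comm]
  have step2 : ∀ x : Fin N → ZMod 2,
      (∑ l, ∑ y, (h x * k y) * chr l (x + y)) = h x * k x * 2 ^ N := by
    intro x
    rw [Finset.sum_comm]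
    have inner : ∀ y : Fin N → ZMod 2,
        (∑ l, (h x * k y) * chr l (x + y)) = if y = x then h x * k y * 2 ^ N else 0 := by
      intro y
      rw [← Finset.mul_sum]
      have : (∑ l, chr l (x + y)) = if x + y = 0 then (2 : ℝ) ^ N else 0 := by
        rw [show (∑ l : Fin N → ZMod 2, chr l (x + y)) = ∑ l, chr (x + y) l from
          Finset.sum_congr rfl fun l _ => chr_comm _ _]
        exact sum_chr_eq _
      rw [this]
      simp only [pi_add_eq_zero_iff]
      split <;> ring
    simp_rw [inner]
    simp [Finset.sum_ite_eq' Finset.univ x (fun y => h x * k y * 2 ^ N)]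
  simp_rw [step2]
  rw [← Finset.sum_mul]; ring

lemma einner_eq_sum_fhat (h k : (Fin N → ZMod 2) → ℝ) :
    einner h k = ∑ l, fhat h l * fhat k l := by
  unfold einner fhat
  simp_rw [div_mul_div_comm]
  rw [← Finset.sum_div, parseval_raw]
  have h2 : (2 : ℝ) ^ N ≠ 0 := by positivity
  field_simp

lemma fhat_conv (f g : (Fin N → ZMod 2) → ℝ) (l : Fin N → ZMod 2) :
    fhat (conv f g) l = fhat f l * fhat g l := by
  unfold fhat conv
  have key : (∑ x, (∑ y, f y * g (x - y)) * chr l x)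
      = (∑ x, f x * chr l x) * (∑ x, g x * chr l x) := by
    simp_rw [Finset.sum_mul]
    rw [Finset.sum_comm]
    refine Finset.sum_congr rfl fun y _ => ?_
    rw [Finset.mul_sum]
    refine (Fintype.sum_equiv (Equiv.addRight y)
      (fun z => f y * chr l y * (g z * chr l z)) _ fun z => ?_).symm
    show f y * chr l y * (g z * chr l z) = f y * g (z + y - y) * chr l (z + y)
    rw [add_sub_cancel_right, chr_add]
    ring
  simp_rw [div_mul_eq_mul_div]
  rw [← Finset.sum_div, key]
  have h2 : (2 : ℝ) ^ N ≠ 0 := by positivity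
  field_simp

lemma fhat_zero' (h : (Fin N → ZMod 2) → ℝ) : fhat h 0 = fexp h := by
  unfold fhat fexp
  congr 1
  exact Finset.sum_congr rfl fun x _ => by simp [chr]

lemma sum_fhat_sq (f : (Fin N → ZMod 2) → ℝ) (hf : ∀ x, f x = 0 ∨ f x = 1) :
    ∑ l, fhat f l ^ 2 = fexp f := by
  have h1 : einner f f = fexp f := by
    unfold einner fexp
    congr 1
    exact Finset.sum_congr rfl fun x _ => by rcases hf x with h | h <;> simp [h]
  have := (einner_eq_sum_fhat f f).symm.trans h1
  simpa [sq] using this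

lemma fexp_nonneg (f : (Fin N → ZMod 2) → ℝ) (hf : ∀ x, f x = 0 ∨ f x = 1) :
    0 ≤ fexp f := by
  unfold fexp
  apply div_nonneg _ (by positivity)
  exact Finset.sum_nonneg fun x _ => by rcases hf x with h | h <;> simp [h]

lemma fexp_le_one (f : (Fin N → ZMod 2) → ℝ) (hf : ∀ x, f x = 0 ∨ f x = 1) :
    fexp f ≤ 1 := by
  unfold fexp
  rw [div_le_one (by positivity)]
  calc (∑ x : Fin N → ZMod 2, f x) ≤ ∑ _x : Fin N → ZMod 2, (1 : ℝ) :=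
        Finset.sum_le_sum fun x _ => by rcases hf x with h | h <;> simp [h]
    _ = 2 ^ N := by
        simp only [Finset.sum_const, Finset.card_univ, nsmul_eq_mul, mul_one]
        exact card_G

end Aux

lemma final_numeric (α β m : ℝ) (hα0 : 0 ≤ α) (hα1 : α ≤ 1) (hβ0 : 0 ≤ β) (hβ1 : β ≤ 1)
    (hm : 0 ≤ m) (h : α * β ≤ m * Real.sqrt ((α - α ^ 2) * (β - β ^ 2))) :
    α * β ≤ (m / (1 + m)) ^ 2 := by
  set t := Real.sqrt (α * β) with ht
  have htαβ : t ^ 2 = α * β := Real.sq_sqrt (mul_nonneg hα0 hβ0)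
  have ht0 : 0 ≤ t := Real.sqrt_nonneg _
  have h2t : 2 * t ≤ α + β := by
    have h1 : t ≤ (α + β) / 2 := by
      rw [ht]
      have := Real.sqrt_le_sqrt (show α * β ≤ ((α + β) / 2) ^ 2 by nlinarith [sq_nonneg (α - β)])
      rwa [Real.sqrt_sq (by linarith)] at this
    linarith
  have ht1 : t ≤ 1 := by nlinarith
  set s := Real.sqrt ((1 - α) * (1 - β)) with hs
  have hs0 : 0 ≤ s := Real.sqrt_nonneg _
  have hsplit : Real.sqrt ((α - α ^ 2) * (β - β ^ 2)) = t * s := by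
    rw [show (α - α ^ 2) * (β - β ^ 2) = (α * β) * ((1 - α) * (1 - β)) by ring,
      Real.sqrt_mul (mul_nonneg hα0 hβ0)]
  have hst : s ≤ 1 - t := by
    calc s ≤ Real.sqrt ((1 - t) ^ 2) := Real.sqrt_le_sqrt (by nlinarith)
      _ = 1 - t := Real.sqrt_sq (by linarith)
  have hmain : t ^ 2 ≤ m * t * (1 - t) := by
    rw [htαβ]
    calc α * β ≤ m * (t * s) := by rwa [hsplit] at h
      _ ≤ m * (t * (1 - t)) :=
        mul_le_mul_of_nonneg_left (mul_le_mul_of_nonneg_left hst ht0) hm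
      _ = m * t * (1 - t) := by ring
  have h1m : (0 : ℝ) < 1 + m := by linarith
  have htle : t ≤ m / (1 + m) := by
    rcases eq_or_lt_of_le ht0 with h0 | h0
    · rw [← h0]; positivity
    · rw [le_div_iff₀ h1m]
      have hmm : t * t ≤ (m * (1 - t)) * t := by nlinarith
      have h3 : t ≤ m * (1 - t) := le_of_mul_le_mul_right hmm h0
      nlinarith
  calc α * β = t ^ 2 := htαβ.symm
    _ ≤ (m / (1 + m)) ^ 2 := pow_le_pow_left₀ ht0 htle 2

/-- Weighted Hoffman bound: if `E[ν] = 1`, `⟨f*g, ν⟩ = 0` and `m` is the maximum of `|ν̂(λ)|`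
over nonzero `λ`, then `E[f]·E[g] ≤ (m/(1+m))²`. -/
theorem hoffman_upper_bound {N : ℕ} (f g ν : (Fin N → ZMod 2) → ℝ)
    (hf : ∀ x, f x = 0 ∨ f x = 1) (hg : ∀ x, g x = 0 ∨ g x = 1)
    (hν : fexp ν = 1) (horth : einner (conv f g) ν = 0)
    (m : ℝ)
    (hm : IsGreatest {r : ℝ | ∃ l : Fin N → ZMod 2, l ≠ 0 ∧ r = |fhat ν l|} m) :
    fexp f * fexp g ≤ (m / (1 + m)) ^ 2 := by
  have hm0 : 0 ≤ m := by
    obtain ⟨l, hl, rfl⟩ := hm.1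
    positivity
  set α := fexp f with hα
  set β := fexp g with hβ
  have hν0 : fhat ν 0 = 1 := by rw [fhat_zero']; exact hν
  have hsum : ∑ l, fhat f l * fhat g l * fhat ν l = 0 := by
    have h1 := einner_eq_sum_fhat (conv f g) ν
    rw [horth] at h1
    simp_rw [fhat_conv] at h1
    exact h1.symm
  have hsplit : α * β + ∑ l ∈ Finset.univ.erase 0, fhat f l * fhat g l * fhat ν l = 0 := by
    rw [← hsum, ← Finset.add_sum_erase Finset.univ _ (Finset.mem_univ 0)]
    congr 1
    rw [hν0, fhat_zero' f, fhat_zero' g, mul_one]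
  set A := ∑ l ∈ Finset.univ.erase 0, |fhat f l| * |fhat g l| with hA
  have hA0 : 0 ≤ A := Finset.sum_nonneg fun l _ => mul_nonneg (abs_nonneg _) (abs_nonneg _)
  have hαβ : α * β ≤ m * A := by
    have e1 : α * β = - ∑ l ∈ Finset.univ.erase 0, fhat f l * fhat g l * fhat ν l := by
      linarith
    rw [e1, hA, Finset.mul_sum, ← Finset.sum_neg_distrib]
    refine Finset.sum_le_sum fun l hl => ?_
    have hlne : l ≠ 0 := Finset.ne_of_mem_erase hl
    have hν_le : |fhat ν l| ≤ m := hm.2 ⟨l, hlne, rfl⟩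
    calc -(fhat f l * fhat g l * fhat ν l) ≤ |fhat f l * fhat g l * fhat ν l| :=
          neg_le_abs _
      _ = |fhat f l| * |fhat g l| * |fhat ν l| := by rw [abs_mul, abs_mul]
      _ ≤ |fhat f l| * |fhat g l| * m :=
          mul_le_mul_of_nonneg_left hν_le (mul_nonneg (abs_nonneg _) (abs_nonneg _))
      _ = m * (|fhat f l| * |fhat g l|) := by ring
  have hfsq : ∑ l ∈ Finset.univ.erase 0, fhat f l ^ 2 = α - α ^ 2 := by
    have h1 := sum_fhat_sq f hf
    have h2 := Finset.add_sum_erase Finset.univ (fun l => fhat f l ^ 2) (Finset.mem_univ 0)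
    rw [h1] at h2
    have h3 : fhat f 0 = α := fhat_zero' f
    simp only [h3] at h2
    nlinarith [h2]
  have hgsq : ∑ l ∈ Finset.univ.erase 0, fhat g l ^ 2 = β - β ^ 2 := by
    have h1 := sum_fhat_sq g hg
    have h2 := Finset.add_sum_erase Finset.univ (fun l => fhat g l ^ 2) (Finset.mem_univ 0)
    rw [h1] at h2
    have h3 : fhat g 0 = β := fhat_zero' g
    simp only [h3] at h2
    nlinarith [h2]
  have hA2 : A ^ 2 ≤ (α - α ^ 2) * (β - β ^ 2) := by
    have := Finset.sum_mul_sq_le_sq_mul_sq (Finset.univ.erase 0)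
      (fun l => |fhat f l|) (fun l => |fhat g l|)
    simp only [sq_abs] at this
    rw [hfsq, hgsq] at this
    exact this
  have hAle : A ≤ Real.sqrt ((α - α ^ 2) * (β - β ^ 2)) := by
    rw [show A = Real.sqrt (A ^ 2) from (Real.sqrt_sq hA0).symm]
    exact Real.sqrt_le_sqrt hA2
  have key : α * β ≤ m * Real.sqrt ((α - α ^ 2) * (β - β ^ 2)) :=
    le_trans hαβ (mul_le_mul_of_nonneg_left hAle hm0)
  exact final_numeric α β m (fexp_nonneg f hf) (fexp_le_one f hf)
    (fexp_nonneg g hg) (fexp_le_one g hg) hm0 key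
end

section
/- Let (F₁, F₂) be a cross-t-chromatic-agreeing pair of families of graphs on n labeled vertices, and let e be a pair of vertices. Then the pair (C_e(F₁), C_e(F₂)) obtained by applying the compression (shift) in direction e to each family is also cross-t-chromatic-agreeing. -/
/-- A pair of families of graphs on `n` labeled vertices is cross-`t`-chromatic-agreeing if
for all `G₁ ∈ F₁`, `G₂ ∈ F₂`, the complement of the symmetric difference `G₁ △ G₂` is not
`(t-1)`-colorable. -/
def CrossChromaticAgreeing {n : ℕ} (t : ℕ) (F₁ F₂ : Set (SimpleGraph (Fin n))) : Prop :=
  ∀ G₁ ∈ F₁, ∀ G₂ ∈ F₂, ¬ ((symmDiff G₁ G₂)ᶜ.Colorable (t - 1))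

/-- The graph `G` together with the edge `{a, b}`. -/
def addEdge {n : ℕ} (G : SimpleGraph (Fin n)) (a b : Fin n) : SimpleGraph (Fin n) :=
  G ⊔ SimpleGraph.fromEdgeSet {s(a, b)}

/-- The compression `C_e(F)` of a family `F` in the direction of the edge `e = {a, b}`:
each `G ∈ F` not containing `e` is replaced by `G ∪ {e}` unless `G ∪ {e} ∈ F` already. -/
def compress {n : ℕ} (a b : Fin n) (F : Set (SimpleGraph (Fin n))) :
    Set (SimpleGraph (Fin n)) :=
  {G | (G ∈ F ∧ (G.Adj a b ∨ addEdge G a b ∈ F)) ∨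
    (∃ G₀ ∈ F, ¬ G₀.Adj a b ∧ addEdge G₀ a b ∉ F ∧ G = addEdge G₀ a b)}

/-- Compression preserves the cross-`t`-chromatic-agreeing property. -/
theorem compress_crossChromaticAgreeing {n t : ℕ} (a b : Fin n) (hab : a ≠ b)
    (F₁ F₂ : Set (SimpleGraph (Fin n))) (h : CrossChromaticAgreeing t F₁ F₂) :
    CrossChromaticAgreeing t (compress a b F₁) (compress a b F₂) := by
  set e : SimpleGraph (Fin n) := SimpleGraph.fromEdgeSet {s(a, b)} with he
  have hadd : ∀ G : SimpleGraph (Fin n), addEdge G a b = G ⊔ e := fun G => rfl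
  have hle : ∀ G : SimpleGraph (Fin n), G.Adj a b → e ≤ G := by
    intro G hG v w hvw
    rw [he, SimpleGraph.fromEdgeSet_adj] at hvw
    simp only [Set.mem_singleton_iff, Sym2.eq_iff] at hvw
    rcases hvw.1 with ⟨rfl, rfl⟩ | ⟨rfl, rfl⟩
    · exact hG
    · exact hG.symm
  have hdisj : ∀ G : SimpleGraph (Fin n), ¬ G.Adj a b → Disjoint G e := by
    intro G hG
    rw [disjoint_iff]
    ext v w
    simp only [SimpleGraph.inf_adj, SimpleGraph.bot_adj, iff_false, not_and]
    intro hv hvw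
    rw [he, SimpleGraph.fromEdgeSet_adj] at hvw
    simp only [Set.mem_singleton_iff, Sym2.eq_iff] at hvw
    rcases hvw.1 with ⟨rfl, rfl⟩ | ⟨rfl, rfl⟩
    · exact hG hv
    · exact hG hv.symm
  have key : ∀ s s' : SimpleGraph (Fin n), s' ≤ s → ¬ sᶜ.Colorable (t-1) →
      ¬ s'ᶜ.Colorable (t-1) := fun s s' hss hns hc =>
    hns (hc.mono_left (compl_le_compl hss))
  intro G₁ hG₁ G₂ hG₂
  rcases hG₁ with ⟨h1, hd1⟩ | ⟨H₁, hH₁, hna1, _, rfl⟩ <;>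
    rcases hG₂ with ⟨h2, hd2⟩ | ⟨H₂, hH₂, hna2, _, rfl⟩
  · exact h G₁ h1 G₂ h2
  · -- G₁ plain, G₂ = H₂ ⊔ e
    rw [hadd, (hdisj H₂ hna2).symmDiff_eq_sup.symm, ← symmDiff_assoc]
    by_cases hA : G₁.Adj a b
    · have heS : e ≤ symmDiff G₁ H₂ := by
        have : e ≤ G₁ \ H₂ := le_sdiff.2 ⟨hle G₁ hA, (hdisj H₂ hna2).symm⟩
        exact this.trans (by rw [symmDiff_def]; exact le_sup_left)
      rw [symmDiff_of_ge heS]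
      exact key _ _ sdiff_le (h G₁ h1 H₂ hH₂)
    · have h1' : G₁ ⊔ e ∈ F₁ := by
        rcases hd1 with hA' | h1'; · exact absurd hA' hA
        · rwa [hadd] at h1'
      have := h (G₁ ⊔ e) h1' H₂ hH₂
      rwa [(hdisj G₁ hA).symmDiff_eq_sup.symm, symmDiff_right_comm] at this
  · -- G₁ = H₁ ⊔ e, G₂ plain
    rw [hadd, (hdisj H₁ hna1).symmDiff_eq_sup.symm, symmDiff_comm (symmDiff H₁ e) G₂,
      ← symmDiff_assoc]
    by_cases hA : G₂.Adj a b
    · have heS : e ≤ symmDiff G₂ H₁ := by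
        have : e ≤ G₂ \ H₁ := le_sdiff.2 ⟨hle G₂ hA, (hdisj H₁ hna1).symm⟩
        exact this.trans (by rw [symmDiff_def]; exact le_sup_left)
      rw [symmDiff_of_ge heS]
      exact key _ _ sdiff_le (by rw [symmDiff_comm]; exact h H₁ hH₁ G₂ h2)
    · have h2' : G₂ ⊔ e ∈ F₂ := by
        rcases hd2 with hA' | h2'; · exact absurd hA' hA
        · rwa [hadd] at h2'
      have := h H₁ hH₁ (G₂ ⊔ e) h2'
      rwa [(hdisj G₂ hA).symmDiff_eq_sup.symm, ← symmDiff_assoc, symmDiff_comm H₁ G₂] at this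
  · -- both shifted
    rw [hadd, hadd, (hdisj H₁ hna1).symmDiff_eq_sup.symm, (hdisj H₂ hna2).symmDiff_eq_sup.symm,
      symmDiff_symmDiff_symmDiff_comm, symmDiff_self, symmDiff_bot]
    exact h H₁ hH₁ H₂ hH₂
end

section
/- Let F be a nonempty monotone increasing family of subsets of [n]. For 0 < p < 1 define μ_p(F) = Σ_{X ∈ F} p^{|X|}(1−p)^{n−|X|}. Then the function p ↦ log_p μ_p(F) is non-increasing in p on (0,1). -/
/-!
Put `L = log_p q ∈ (0, 1]`, so that `q = p ^ L`; the claim is `μ_p(F) ^ L ≤ μ_q(F)`. More generally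
`E_p[f] ^ L ≤ E_{p^L}[f ^ L]` for every monotone `f ≥ 0` on the subsets of a finite ground set, by
induction on the ground set: conditioning on one element writes `E_p[f] = (1 - p) a + p b` with
`a ≤ b` by monotonicity, and `((1 - p) a + p b) ^ L ≤ (1 - p ^ L) a ^ L + p ^ L b ^ L` is Minkowski's
inequality in `ℓ^{1/L}` for the vectors `((a (1 - p)) ^ L, (a p) ^ L)` and `(0, (b ^ L - a ^ L) p ^ L)`.
-/

/-- The `p`-biased measure of a family `F` of subsets of `[n]`:
`μ_p(F) = Σ_{X ∈ F} p^{|X|} (1-p)^{n-|X|}`. -/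
noncomputable def biasedMeasure (n : ℕ) (p : ℝ) (F : Finset (Finset (Fin n))) : ℝ :=
  ∑ X ∈ F, p ^ X.card * (1 - p) ^ (n - X.card)

open Finset Real

theorem Lp_add_le_of_nonneg_two {m x₁ x₂ y₁ y₂ : ℝ} (hm : 1 ≤ m) (hx₁ : 0 ≤ x₁) (hx₂ : 0 ≤ x₂)
    (hy₁ : 0 ≤ y₁) (hy₂ : 0 ≤ y₂) :
    ((x₁ + y₁) ^ m + (x₂ + y₂) ^ m) ^ (1 / m) ≤
      (x₁ ^ m + x₂ ^ m) ^ (1 / m) + (y₁ ^ m + y₂ ^ m) ^ (1 / m) := by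
  have := Real.Lp_add_le_of_nonneg (s := univ) (f := ![x₁, x₂]) (g := ![y₁, y₂]) hm
    (by simp [Fin.forall_fin_two, hx₁, hx₂]) (by simp [Fin.forall_fin_two, hy₁, hy₂])
  simpa [Fin.sum_univ_two] using this

theorem rpow_mix_le_mix_rpow {L p a b : ℝ} (hL0 : 0 < L) (hL1 : L ≤ 1) (hp0 : 0 ≤ p)
    (hp1 : p ≤ 1) (ha : 0 ≤ a) (hab : a ≤ b) :
    ((1 - p) * a + p * b) ^ L ≤ (1 - p ^ L) * a ^ L + p ^ L * b ^ L := by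
  have hb : 0 ≤ b := ha.trans hab
  have hm : 1 ≤ L⁻¹ := one_le_inv_iff₀.2 ⟨hL0, hL1⟩
  have hL : 1 / L⁻¹ = L := by rw [one_div, inv_inv]
  have hgap : 0 ≤ (b ^ L - a ^ L) * p ^ L :=
    mul_nonneg (sub_nonneg.2 (rpow_le_rpow ha hab hL0.le)) (rpow_nonneg hp0 _)
  have key := Lp_add_le_of_nonneg_two hm (rpow_nonneg (mul_nonneg ha (sub_nonneg.2 hp1)) L)
    (rpow_nonneg (mul_nonneg ha hp0) L) le_rfl hgap
  have hsplit : (a * p) ^ L + (b ^ L - a ^ L) * p ^ L = (b * p) ^ L := by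
    rw [mul_rpow ha hp0, mul_rpow hb hp0]; ring
  rw [add_zero, hsplit, hL] at key
  simp only [rpow_rpow_inv (mul_nonneg ha (sub_nonneg.2 hp1)) hL0.ne',
    rpow_rpow_inv (mul_nonneg ha hp0) hL0.ne', rpow_rpow_inv (mul_nonneg hb hp0) hL0.ne', zero_rpow (inv_ne_zero hL0.ne'), zero_add,
    rpow_inv_rpow hgap hL0.ne'] at key
  calc ((1 - p) * a + p * b) ^ L = (a * (1 - p) + b * p) ^ L := by ring_nf
    _ ≤ (a * (1 - p) + a * p) ^ L + (b ^ L - a ^ L) * p ^ L := key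
    _ = (1 - p ^ L) * a ^ L + p ^ L * b ^ L := by rw [← mul_add, sub_add_cancel, mul_one]; ring

section BiasedExpectation

variable {α : Type*}

noncomputable def biasedExpectation (p : ℝ) (s : Finset α) (f : Finset α → ℝ) : ℝ :=
  ∑ X ∈ s.powerset, p ^ X.card * (1 - p) ^ (s.card - X.card) * f X

@[simp]
theorem biasedExpectation_empty (p : ℝ) (f : Finset α → ℝ) : biasedExpectation p ∅ f = f ∅ := by
  simp [biasedExpectation]

theorem biasedExpectation_insert [DecidableEq α] {a : α} {s : Finset α} (ha : a ∉ s) (p : ℝ)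
    (f : Finset α → ℝ) :
    biasedExpectation p (insert a s) f =
      (1 - p) * biasedExpectation p s f + p * biasedExpectation p s (fun X ↦ f (insert a X)) := by
  rw [biasedExpectation, sum_powerset_insert ha, biasedExpectation, biasedExpectation,
    mul_sum, mul_sum, card_insert_of_notMem ha]
  congr 1 <;> refine sum_congr rfl fun X hX ↦ ?_
  · have hXs := card_le_card (mem_powerset.1 hX)
    rw [Nat.succ_sub hXs, pow_succ]
    ring
  · have haX : a ∉ X := fun h ↦ ha (mem_powerset.1 hX h)
    rw [card_insert_of_notMem haX, Nat.add_sub_add_right, pow_succ]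
    ring

variable {p : ℝ} {s : Finset α} {f g : Finset α → ℝ}

theorem biasedExpectation_nonneg (hp0 : 0 ≤ p) (hp1 : p ≤ 1) (hf : 0 ≤ f) :
    0 ≤ biasedExpectation p s f :=
  sum_nonneg fun X _ ↦ by
    have : 0 ≤ f X := hf X
    have : 0 ≤ 1 - p := sub_nonneg.2 hp1
    positivity

theorem biasedExpectation_mono (hp0 : 0 ≤ p) (hp1 : p ≤ 1) (hfg : f ≤ g) :
    biasedExpectation p s f ≤ biasedExpectation p s g :=
  sum_le_sum fun X _ ↦ by
    have : 0 ≤ 1 - p := sub_nonneg.2 hp1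
    exact mul_le_mul_of_nonneg_left (hfg X) (by positivity)

theorem rpow_biasedExpectation_le [DecidableEq α] {L : ℝ} (hL0 : 0 < L) (hL1 : L ≤ 1) (hp0 : 0 ≤ p)
    (hp1 : p ≤ 1) (hf : Monotone f) (hf0 : 0 ≤ f) :
    biasedExpectation p s f ^ L ≤ biasedExpectation (p ^ L) s (fun X ↦ f X ^ L) := by
  induction s using Finset.induction_on generalizing f with
  | empty => simp
  | insert a s ha ih =>
    have hq0 : 0 ≤ p ^ L := rpow_nonneg hp0 L
    have hq1 : p ^ L ≤ 1 := rpow_le_one hp0 hp1 hL0.le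
    have hfa : Monotone fun X ↦ f (insert a X) := hf.comp fun _ _ ↦ insert_subset_insert a
    rw [biasedExpectation_insert ha, biasedExpectation_insert ha]
    calc _ ≤ (1 - p ^ L) * biasedExpectation p s f ^ L
          + p ^ L * biasedExpectation p s (fun X ↦ f (insert a X)) ^ L :=
          rpow_mix_le_mix_rpow hL0 hL1 hp0 hp1 (biasedExpectation_nonneg hp0 hp1 hf0)
            (biasedExpectation_mono hp0 hp1 fun X ↦ hf (subset_insert a X))
      _ ≤ _ := add_le_add (mul_le_mul_of_nonneg_left (ih hf hf0) (sub_nonneg.2 hq1))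
          (mul_le_mul_of_nonneg_left (ih hfa fun X ↦ hf0 (insert a X)) hq0)

end BiasedExpectation

theorem biasedMeasure_eq_biasedExpectation (n : ℕ) (p : ℝ) (F : Finset (Finset (Fin n))) :
    biasedMeasure n p F = biasedExpectation p univ (fun X ↦ if X ∈ F then 1 else 0) := by
  simp [biasedMeasure, biasedExpectation, mul_ite, sum_ite_mem]

theorem rpow_biasedMeasure_le {n : ℕ} {F : Finset (Finset (Fin n))}
    (hmono : ∀ X ∈ F, ∀ Y : Finset (Fin n), X ⊆ Y → Y ∈ F) {L p : ℝ} (hL0 : 0 < L) (hL1 : L ≤ 1)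
    (hp0 : 0 ≤ p) (hp1 : p ≤ 1) : biasedMeasure n p F ^ L ≤ biasedMeasure n (p ^ L) F := by
  have hind : Monotone fun X : Finset (Fin n) ↦ if X ∈ F then (1 : ℝ) else 0 := fun X Y hXY ↦ by
    by_cases hX : X ∈ F
    · simp [hX, hmono X hX Y hXY]
    · simp only [hX, if_false]; split_ifs <;> norm_num
  have := rpow_biasedExpectation_le (s := univ) hL0 hL1 hp0 hp1 hind fun X ↦ by
    by_cases hX : X ∈ F <;> simp [hX]
  simpa [← biasedMeasure_eq_biasedExpectation, apply_ite (· ^ L), zero_rpow hL0.ne'] using this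

theorem biasedMeasure_pos {n : ℕ} {p : ℝ} {F : Finset (Finset (Fin n))} (hF : F.Nonempty)
    (hp0 : 0 < p) (hp1 : p < 1) : 0 < biasedMeasure n p F :=
  sum_pos (fun X _ ↦ by have : 0 < 1 - p := sub_pos.2 hp1; positivity) hF

theorem logp_biasedMeasure_antitone_general {n : ℕ} (F : Finset (Finset (Fin n)))
    (hmono : ∀ X ∈ F, ∀ Y : Finset (Fin n), X ⊆ Y → Y ∈ F)
    (p q : ℝ) (hp : 0 < p) (hpq : p ≤ q) (hq : q < 1) :
    Real.log (biasedMeasure n q F) / Real.log q ≤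
      Real.log (biasedMeasure n p F) / Real.log p := by
  have hp1 : p < 1 := hpq.trans_lt hq
  have hq0 : 0 < q := hp.trans_le hpq
  rcases F.eq_empty_or_nonempty with rfl | hF
  · simp [biasedMeasure] -- both sides are `log 0 / _ = 0`
  set L := logb p q with hL
  have hL0 : 0 < L := logb_pos_of_base_lt_one hp hp1 hq0 hq
  have hL1 : L ≤ 1 := (div_le_one_of_neg (log_neg hp hp1)).2 (log_le_log hp hpq)
  have hpL : p ^ L = q := rpow_logb hp hp1.ne hq0
  have hμ : biasedMeasure n p F ^ L ≤ biasedMeasure n q F :=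
    hpL ▸ rpow_biasedMeasure_le hmono hL0 hL1 hp.le hp1.le
  have hlog : L * log (biasedMeasure n p F) ≤ log (biasedMeasure n q F) := by
    have hμp := biasedMeasure_pos hF hp hp1
    simpa [log_rpow hμp] using log_le_log (rpow_pos_of_pos hμp L) hμ
  have hlq : log q < 0 := log_neg hq0 hq
  calc log (biasedMeasure n q F) / log q ≤ L * log (biasedMeasure n p F) / log q :=
        div_le_div_of_nonpos_of_le hlq.le hlog
    _ = log (biasedMeasure n p F) / log p := by
        rw [hL, logb]; field_simp [hlq.ne, (log_neg hp hp1).ne]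

/-- For a nonempty monotone increasing family `F ⊆ 2^{[n]}`, the function
`p ↦ log_p μ_p(F)` is non-increasing on `(0, 1)`. -/
theorem logp_biasedMeasure_antitone {n : ℕ} (F : Finset (Finset (Fin n)))
    (hne : F.Nonempty) (hmono : ∀ X ∈ F, ∀ Y : Finset (Fin n), X ⊆ Y → Y ∈ F)
    (p q : ℝ) (hp : 0 < p) (hpq : p ≤ q) (hq : q < 1) :
    Real.log (biasedMeasure n q F) / Real.log q ≤
      Real.log (biasedMeasure n p F) / Real.log p :=
  logp_biasedMeasure_antitone_general F hmono p q hp hpq hq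
end

section
/- Let G be a graph on n labeled vertices with at least two connected components, let u, v ∈ V(G) be vertices with no path between them, and let G' = G/(u∼v) be the graph obtained by identifying u and v. Let q ≥ 1, let {c_H} be real coefficients indexed by unlabeled graphs, and define c'_H as the maximum of |c_{H'}| over all graphs H' that transform to H by contracting at most one pair of disconnected vertices. Then Σ_H |c_H|·P[G_q ≅ H] ≤ Σ_H c'_H·P[G'_q ≅ H], where G_q is the random graph obtained by uniformly q-coloring V(G), deleting monochromatic edges, then deleting isolated vertices. -/
/-- The graph obtained from `G` by a vertex coloring `φ` by deleting all monochromatic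
edges. (Vertices are retained, so isolated vertices play the role of padding; unlabeled
graphs are represented by graphs on a fixed vertex set up to isomorphism.) -/
def delColor {V : Type*} {q : ℕ} (G : SimpleGraph V) (φ : V → Fin q) : SimpleGraph V where
  Adj a b := G.Adj a b ∧ φ a ≠ φ b
  symm := ⟨fun a b h => ⟨h.1.symm, h.2.symm⟩⟩
  loopless := ⟨fun a h => G.loopless.irrefl a h.1⟩

/-- The graph obtained from `G` by identifying the vertex `v` with the vertex `u`
(the vertex `v` remains, as an isolated vertex). -/
def contractPair {V : Type*} [DecidableEq V] (G : SimpleGraph V) (u v : V) :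
    SimpleGraph V where
  Adj a b := a ≠ b ∧ a ≠ v ∧ b ≠ v ∧
    (G.Adj a b ∨ (a = u ∧ G.Adj v b) ∨ (b = u ∧ G.Adj a v))
  symm := ⟨fun a b h => by
    obtain ⟨h1, h2, h3, h4⟩ := h
    refine ⟨h1.symm, h3, h2, ?_⟩
    rcases h4 with h | ⟨ha, hb⟩ | ⟨hb, ha⟩
    · exact Or.inl h.symm
    · exact Or.inr (Or.inr ⟨ha, hb.symm⟩)
    · exact Or.inr (Or.inl ⟨hb, ha.symm⟩)⟩
  loopless := ⟨fun a h => h.1 rfl⟩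

/-- `H'` may be transformed to `H` by contracting at most one pair of disconnected
vertices (up to isomorphism, as these represent unlabeled graphs). -/
def TransformsTo {V : Type*} [DecidableEq V] (H' H : SimpleGraph V) : Prop :=
  Nonempty (H' ≃g H) ∨
    ∃ a b, a ≠ b ∧ ¬ H'.Reachable a b ∧ Nonempty (contractPair H' a b ≃g H)

/-! Shifting every color on the component of `v` by the same amount leaves `G_φ` unchanged, and
shifting by `φ u - φ v` makes `u` and `v` equally colored. Since `u` and `v` lie in different
components, the shift can be chosen so that it becomes a bijection of colorings, which turns
`Σ_φ |c (G_φ)|` into the same sum over colorings that agree on `u` and `v`. For such colorings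
`(G/(u∼v))_φ` is the contraction of `G_φ` at the disconnected pair `u, v`, so each summand is
bounded by the corresponding value of `c'`. -/

namespace SimpleGraph

variable {V : Type*} {q : ℕ} (G : SimpleGraph V)

lemma delColor_le (φ : V → Fin q) : delColor G φ ≤ G := fun _ _ h => h.1

lemma delColor_add_of_adj [NeZero q] (φ f : V → Fin q) (hf : ∀ a b, G.Adj a b → f a = f b) :
    delColor G (φ + f) = delColor G φ := by
  ext a b
  simp only [delColor, Pi.add_apply]
  exact and_congr_right fun hab => by rw [hf a b hab, ne_eq, ne_eq, add_left_inj]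

lemma delColor_contractPair [DecidableEq V] (u v : V) (φ : V → Fin q) :
    delColor (contractPair G u v) φ =
      contractPair (delColor G (Function.update φ v (φ u))) u v := by
  ext a b
  simp only [delColor, contractPair]
  constructor
  · rintro ⟨⟨hab, hav, hbv, h | ⟨rfl, h⟩ | ⟨rfl, h⟩⟩, hne⟩ <;>
      simp_all [Function.update_of_ne]
  · rintro ⟨hab, hav, hbv, ⟨h, hne⟩ | ⟨rfl, h, hne⟩ | ⟨rfl, h, hne⟩⟩ <;>
      simp_all [Function.update_of_ne]

lemma transformsTo_contractPair [DecidableEq V] {a b : V} (hab : a ≠ b) (h : ¬ G.Reachable a b) :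
    TransformsTo G (contractPair G a b) :=
  Or.inr ⟨a, b, hab, h, ⟨RelIso.refl _⟩⟩

section componentShift

variable [NeZero q] [DecidableEq V] (u v : V)

/-- In effect, `v` keeps its color and the rest of its component is shifted by `φ v - φ u`;
so `φ u` and `φ v` can be read off the result, which makes the map injective. -/
noncomputable def componentShift (φ : V → Fin q) : V → Fin q :=
  Function.update φ v (φ u) + {x | G.Reachable v x}.indicator fun _ => φ v - φ u

lemma delColor_componentShift (φ : V → Fin q) :
    delColor G (componentShift G u v φ) = delColor G (Function.update φ v (φ u)) := by
  refine delColor_add_of_adj G _ _ fun a b hab => ?_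
  by_cases ha : G.Reachable v a
  · rw [Set.indicator_of_mem (s := {x | G.Reachable v x}) ha,
      Set.indicator_of_mem (s := {x | G.Reachable v x}) (ha.trans hab.reachable)]
  · rw [Set.indicator_of_notMem (s := {x | G.Reachable v x}) ha,
      Set.indicator_of_notMem (s := {x | G.Reachable v x})
        fun hb => ha (hb.trans hab.symm.reachable)]

variable {G u v}

lemma componentShift_apply_left (huv : ¬ G.Reachable u v) (φ : V → Fin q) :
    componentShift G u v φ u = φ u := by
  have hne : u ≠ v := by rintro rfl; exact huv .rfl
  have hvu : ¬ G.Reachable v u := fun h => huv h.symm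
  simp [componentShift, Function.update_of_ne hne, hvu]

lemma componentShift_apply_right (φ : V → Fin q) : componentShift G u v φ v = φ v := by
  simp [componentShift]

lemma componentShift_injective (huv : ¬ G.Reachable u v) :
    Function.Injective (componentShift (q := q) G u v) := by
  intro φ ψ h
  have hu : φ u = ψ u := by
    rw [← componentShift_apply_left huv φ, h, componentShift_apply_left huv ψ]
  have hv : φ v = ψ v := by
    rw [← componentShift_apply_right φ, h, componentShift_apply_right ψ]
  funext x
  by_cases hx : x = v
  · rwa [hx]
  · simpa [componentShift, hu, hv, Function.update_of_ne hx] using congrFun h x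

end componentShift

lemma sum_delColor_eq_sum_delColor_update [NeZero q] [Fintype V] [DecidableEq V]
    {M : Type*} [AddCommMonoid M] (f : SimpleGraph V → M) {u v : V} (huv : ¬ G.Reachable u v) :
    ∑ φ : V → Fin q, f (delColor G φ) =
      ∑ φ : V → Fin q, f (delColor G (Function.update φ v (φ u))) := by
  rw [← (Finite.injective_iff_bijective.mp (componentShift_injective huv)).sum_comp]
  simp only [delColor_componentShift]

end SimpleGraph

open SimpleGraph in
theorem contraction_bound_general {V : Type*} [Fintype V] [DecidableEq V] (q : ℕ) (hq : 0 < q)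
    (G : SimpleGraph V)
    (u v : V) (huv : ¬ G.Reachable u v)
    (c c' : SimpleGraph V → ℝ)
    (hc' : ∀ H : SimpleGraph V,
      IsGreatest {r : ℝ | ∃ H' : SimpleGraph V, TransformsTo H' H ∧ r = |c H'|} (c' H)) :
    (∑ φ : V → Fin q, |c (delColor G φ)|) / q ^ Fintype.card V ≤
      (∑ φ : V → Fin q, c' (delColor (contractPair G u v) φ)) / q ^ Fintype.card V := by
  have : NeZero q := ⟨hq.ne'⟩
  have huv_ne : u ≠ v := by rintro rfl; exact huv .rfl
  rw [sum_delColor_eq_sum_delColor_update G (fun H => |c H|) huv]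
  gcongr with φ
  refine (hc' _).2 ⟨_, ?_, rfl⟩
  rw [delColor_contractPair]
  exact transformsTo_contractPair _ huv_ne fun h => huv (h.mono (delColor_le G _))

/-- Lemma 3.5: contracting a pair of disconnected vertices of a disconnected graph `G`
does not decrease the weighted probability sum: `Σ_H |c_H| P[G_q ≅ H] ≤ Σ_H c'_H P[G'_q ≅ H]`
where `G' = G/(u ∼ v)` and `c'_H` is the maximum of `|c_{H'}|` over all `H'` transforming
to `H` by at most one contraction of a disconnected pair. The sums over unlabeled graphs
are expressed as expectations over uniform colorings, the coefficients being
isomorphism-invariant. -/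
theorem contraction_bound {V : Type*} [Fintype V] [DecidableEq V] (q : ℕ) (hq : 0 < q)
    (G : SimpleGraph V) (hcomps : 2 ≤ Nat.card G.ConnectedComponent)
    (u v : V) (huv : ¬ G.Reachable u v)
    (c c' : SimpleGraph V → ℝ)
    (hinv : ∀ H H' : SimpleGraph V, Nonempty (H ≃g H') → c H = c H')
    (hc' : ∀ H : SimpleGraph V,
      IsGreatest {r : ℝ | ∃ H' : SimpleGraph V, TransformsTo H' H ∧ r = |c H'|} (c' H)) :
    (∑ φ : V → Fin q, |c (delColor G φ)|) / q ^ Fintype.card V ≤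
      (∑ φ : V → Fin q, c' (delColor (contractPair G u v) φ)) / q ^ Fintype.card V :=
  contraction_bound_general q hq G u v huv c c' hc'
end
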